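/- Let L be the nonlocal operator Lu(x) = (1/2)∫_{ℝⁿ∖{0}} (u(x+y)+u(x−y)−2u(x)) J(|y|) dy, where J:(0,∞)→(0,∞) is non-increasing with ∫_{ℝⁿ}(1∧|y|²)J(|y|)dy < ∞ and ∫_{B_r}|y|²J(|y|)dy > 0 for every r>0. Then for r ≥ 4 and w(x) = min(1, |x|²/r³), there exists δ(r) = r⁻³∫_{B_r}|y|²J(|y|)dy > 0 such that Lw(x) ≥ δ(r) for all x with |x| < r. -/

import Mathlib

open MeasureTheory

/-- The symmetric nonlocal operator with kernel J(|y|)dy. -/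
noncomputable def Lop {n : ℕ} (J : ℝ → ℝ) (v : EuclideanSpace ℝ (Fin n) → ℝ)
    (x : EuclideanSpace ℝ (Fin n)) : ℝ :=
  (1 / 2) * ∫ y : EuclideanSpace ℝ (Fin n), (v (x + y) + v (x - y) - 2 * v x) * J ‖y‖

/-!
The test function `w = min 1 (‖·‖² / r³)` is uncapped at `x ± y` whenever `‖x‖, ‖y‖ < r`
(as `(2r)² ≤ r³` for `r ≥ 4`), and there its second difference is exactly `2‖y‖² / r³` by the
parallelogram law. Elsewhere the second difference is still nonnegative, because `w x ≤ 1/2`,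
so restricting the integral defining `Lw(x)` to the ball `B_r` only decreases it. It is dominated
by `2 min 1 ‖y‖²`, which makes it integrable against `J`.
-/

section SecondDifference

variable {E : Type*} {a : ℝ}

def secondDiff [AddGroup E] (v : E → ℝ) (x y : E) : ℝ :=
  v (x + y) + v (x - y) - 2 * v x

section Seminormed

variable [SeminormedAddCommGroup E]

noncomputable def cappedSq (a : ℝ) (z : E) : ℝ :=
  min 1 (‖z‖ ^ 2 / a)

theorem cappedSq_nonneg (ha : 0 ≤ a) (z : E) : 0 ≤ cappedSq a z :=
  le_min zero_le_one (by positivity)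

theorem cappedSq_eq (ha : 0 < a) {z : E} (hz : ‖z‖ ^ 2 ≤ a) : cappedSq a z = ‖z‖ ^ 2 / a :=
  min_eq_right ((div_le_one ha).2 hz)

theorem continuous_secondDiff_cappedSq (x : E) :
    Continuous (secondDiff (cappedSq a) x) := by
  unfold secondDiff cappedSq
  fun_prop

end Seminormed

variable [NormedAddCommGroup E] [InnerProductSpace ℝ E]

theorem secondDiff_sq_norm (x y : E) :
    secondDiff (fun z => ‖z‖ ^ 2) x y = 2 * ‖y‖ ^ 2 := by
  have := parallelogram_law_with_norm ℝ x y
  unfold secondDiff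
  nlinarith

theorem secondDiff_cappedSq_eq (ha : 0 < a) {x y : E} (hplus : ‖x + y‖ ^ 2 ≤ a)
    (hminus : ‖x - y‖ ^ 2 ≤ a) : secondDiff (cappedSq a) x y = 2 * ‖y‖ ^ 2 / a := by
  have hpar := secondDiff_sq_norm x y
  unfold secondDiff at hpar
  have hx : ‖x‖ ^ 2 ≤ a := by nlinarith [sq_nonneg ‖y‖]
  unfold secondDiff
  rw [cappedSq_eq ha hplus, cappedSq_eq ha hminus, cappedSq_eq ha hx]
  field_simp
  linarith

theorem secondDiff_cappedSq_nonneg (ha : 0 < a) {x : E} (hx : 2 * ‖x‖ ^ 2 ≤ a) (y : E) :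
    0 ≤ secondDiff (cappedSq a) x y := by
  have hwx : 2 * cappedSq a x ≤ 1 := by
    rw [cappedSq_eq ha (by nlinarith [sq_nonneg ‖x‖]), mul_div_assoc', div_le_one ha]
    exact hx
  have hplus := cappedSq_nonneg ha.le (x + y)
  have hminus := cappedSq_nonneg ha.le (x - y)
  rcases le_total (‖x + y‖ ^ 2) a with hp | hp
  · rcases le_total (‖x - y‖ ^ 2) a with hm | hm
    · rw [secondDiff_cappedSq_eq ha hp hm]
      positivity
    · have : cappedSq a (x - y) = 1 := min_eq_left ((one_le_div ha).2 hm)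
      unfold secondDiff
      linarith
  · have : cappedSq a (x + y) = 1 := min_eq_left ((one_le_div ha).2 hp)
    unfold secondDiff
    linarith

theorem secondDiff_cappedSq_le (ha : 0 < a) {x : E} (hx : ‖x‖ ^ 2 ≤ a) (y : E) :
    secondDiff (cappedSq a) x y ≤ 2 * min 1 (‖y‖ ^ 2 / a) := by
  have hpar := secondDiff_sq_norm x y
  have hwx := cappedSq_eq ha hx
  have hplus : cappedSq a (x + y) ≤ ‖x + y‖ ^ 2 / a := min_le_right _ _
  have hminus : cappedSq a (x - y) ≤ ‖x - y‖ ^ 2 / a := min_le_right _ _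
  have hquad : secondDiff (cappedSq a) x y ≤ 2 * ‖y‖ ^ 2 / a := by
    unfold secondDiff at hpar ⊢
    rw [hwx]
    calc _ ≤ ‖x + y‖ ^ 2 / a + ‖x - y‖ ^ 2 / a - 2 * (‖x‖ ^ 2 / a) := by linarith
      _ = 2 * ‖y‖ ^ 2 / a := by field_simp; linarith
  have hone : secondDiff (cappedSq a) x y ≤ 2 := by
    have : cappedSq a (x + y) ≤ 1 := min_le_left _ _
    have : cappedSq a (x - y) ≤ 1 := min_le_left _ _
    have := cappedSq_nonneg ha.le x
    unfold secondDiff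
    linarith
  rw [mul_min_of_nonneg _ _ zero_le_two, mul_one, ← mul_div_assoc]
  exact le_min hone hquad

theorem abs_secondDiff_cappedSq_le (ha : 1 ≤ a) {x : E} (hx : 2 * ‖x‖ ^ 2 ≤ a) (y : E) :
    |secondDiff (cappedSq a) x y| ≤ 2 * min 1 (‖y‖ ^ 2) := by
  have ha0 : 0 < a := one_pos.trans_le ha
  rw [abs_of_nonneg (secondDiff_cappedSq_nonneg ha0 hx y)]
  refine (secondDiff_cappedSq_le ha0 (by linarith [sq_nonneg ‖x‖]) y).trans ?_
  gcongr
  exact div_le_self (sq_nonneg _) ha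

end SecondDifference

/-- No measurability of `g` is needed: where `m` vanishes so does `f`, hence `f * g` equals
`(f / m) * (m * g)`. -/
theorem MeasureTheory.Integrable.mul_of_abs_le_const_mul {α : Type*} [MeasurableSpace α]
    {μ : Measure α} {f g m : α → ℝ} (hmg : Integrable (fun y => m y * g y) μ) (hf : Measurable f)
    (hm : Measurable m) {C : ℝ} (hfm : ∀ y, |f y| ≤ C * |m y|) :
    Integrable (fun y => f y * g y) μ := by
  have hfac : (fun y => f y * g y) = fun y => f y / m y * (m y * g y) := by
    funext y
    by_cases hy : m y = 0
    · have : f y = 0 := abs_nonpos_iff.1 (by simpa [hy] using hfm y)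
      simp [this, hy]
    · field_simp
  have hmeas : AEStronglyMeasurable (fun y => f y * g y) μ := by
    rw [hfac]
    exact (hf.div hm).aestronglyMeasurable.mul hmg.aestronglyMeasurable
  refine Integrable.mono' (hmg.norm.const_mul C) hmeas (.of_forall fun y => ?_)
  simp only [norm_mul, Real.norm_eq_abs, ← mul_assoc]
  exact mul_le_mul_of_nonneg_right (hfm y) (abs_nonneg _)

theorem stmt9_general {n : ℕ} (J : ℝ → ℝ)
    (hJpos : ∀ s : ℝ, 0 < s → 0 < J s)
    (hJint : Integrable (fun y : EuclideanSpace ℝ (Fin n) => min 1 (‖y‖ ^ 2) * J ‖y‖))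
    (r : ℝ) (hr : 4 ≤ r)
    (hJr : 0 < ∫ y in Metric.ball (0 : EuclideanSpace ℝ (Fin n)) r, ‖y‖ ^ 2 * J ‖y‖) :
    0 < (∫ y in Metric.ball (0 : EuclideanSpace ℝ (Fin n)) r, ‖y‖ ^ 2 * J ‖y‖) / r ^ 3 ∧
    ∀ x : EuclideanSpace ℝ (Fin n), ‖x‖ < r →
      (∫ y in Metric.ball (0 : EuclideanSpace ℝ (Fin n)) r, ‖y‖ ^ 2 * J ‖y‖) / r ^ 3 ≤
        Lop J (fun z => min 1 (‖z‖ ^ 2 / r ^ 3)) x := by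
  have ha : 0 < r ^ 3 := by positivity
  have hsq_le {u : EuclideanSpace ℝ (Fin n)} (hu : ‖u‖ ≤ 2 * r) : ‖u‖ ^ 2 ≤ r ^ 3 := by
    nlinarith [mul_self_le_mul_self (norm_nonneg u) hu, mul_nonneg (sq_nonneg r) (sub_nonneg.2 hr)]
  refine ⟨div_pos hJr ha, fun x hx => ?_⟩
  have hx2 : 2 * ‖x‖ ^ 2 ≤ r ^ 3 := by
    nlinarith [mul_self_lt_mul_self (norm_nonneg x) hx, mul_nonneg (sq_nonneg r) (sub_nonneg.2 hr)]
  set d := secondDiff (cappedSq (r ^ 3)) x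
  have hnonneg y : 0 ≤ d y * J ‖y‖ := by
    rcases eq_or_ne y 0 with rfl | hy
    · simp [d, secondDiff, ← two_mul]
    · exact mul_nonneg (secondDiff_cappedSq_nonneg ha hx2 y) (hJpos _ (norm_pos_iff.2 hy)).le
  have hint : Integrable fun y => d y * J ‖y‖ :=
    hJint.mul_of_abs_le_const_mul (continuous_secondDiff_cappedSq x).measurable (by fun_prop)
      fun y => (abs_secondDiff_cappedSq_le (one_le_pow₀ (by linarith)) hx2 y).trans_eq
        (by rw [abs_of_nonneg (by positivity)])
  have hball : ∀ y ∈ Metric.ball (0 : EuclideanSpace ℝ (Fin n)) r,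
      d y * J ‖y‖ = 2 / r ^ 3 * (‖y‖ ^ 2 * J ‖y‖) := by
    intro y hy
    rw [mem_ball_zero_iff] at hy
    have hd : d y = 2 * ‖y‖ ^ 2 / r ^ 3 := secondDiff_cappedSq_eq ha
      (hsq_le (by linarith [norm_add_le x y])) (hsq_le (by linarith [norm_sub_le x y]))
    rw [hd]
    ring
  calc _ = 1 / 2 * ∫ y in Metric.ball 0 r, d y * J ‖y‖ := by
        rw [setIntegral_congr_fun measurableSet_ball hball, integral_const_mul]
        ring
    _ ≤ 1 / 2 * ∫ y, d y * J ‖y‖ :=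
        mul_le_mul_of_nonneg_left (setIntegral_le_integral hint (.of_forall hnonneg)) (by norm_num)
    _ = _ := rfl

/-- For J non-increasing and positive with ∫(1∧|y|²)J(|y|)dy < ∞ and
∫_{B_r}|y|²J(|y|)dy > 0, for r ≥ 4 and w(x) = min(1,|x|²/r³), the quantity
δ(r) = r⁻³∫_{B_r}|y|²J(|y|)dy is positive and Lw(x) ≥ δ(r) for all |x| < r. -/
theorem stmt9 {n : ℕ} (J : ℝ → ℝ)
    (hJpos : ∀ s : ℝ, 0 < s → 0 < J s)
    (hJanti : AntitoneOn J (Set.Ioi (0:ℝ)))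
    (hJint : Integrable (fun y : EuclideanSpace ℝ (Fin n) => min 1 (‖y‖ ^ 2) * J ‖y‖))
    (r : ℝ) (hr : 4 ≤ r)
    (hJr : 0 < ∫ y in Metric.ball (0 : EuclideanSpace ℝ (Fin n)) r, ‖y‖ ^ 2 * J ‖y‖) :
    0 < (∫ y in Metric.ball (0 : EuclideanSpace ℝ (Fin n)) r, ‖y‖ ^ 2 * J ‖y‖) / r ^ 3 ∧
    ∀ x : EuclideanSpace ℝ (Fin n), ‖x‖ < r →
      (∫ y in Metric.ball (0 : EuclideanSpace ℝ (Fin n)) r, ‖y‖ ^ 2 * J ‖y‖) / r ^ 3 ≤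
        Lop J (fun z => min 1 (‖z‖ ^ 2 / r ^ 3)) x :=
  stmt9_general J hJpos hJint r hr hJr
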